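/- arXiv:1801.06803 — 2 statements merged into one kernel-verified Lean document; each statement's English description precedes it below -/
import Mathlib

section
/- Let 1 ≤ q ≤ ∞ and s ≥ 0 with s > n/q′. Then for sequences a, b : ℤⁿ → ℂ in ℓ^q_s, the convolution (a∗b)_k = Σ_{ℓ∈ℤⁿ} a_ℓ b_{k−ℓ} is well-defined and satisfies ‖a∗b‖_{ℓ^q_s} ≤ C ‖a‖_{ℓ^q_s} ‖b‖_{ℓ^q_s}, i.e., ℓ^q_s(ℤⁿ) is a convolution algebra. -/
/-!
Peetre's inequality `⟨k⟩^s ≤ 2^s (⟨ℓ⟩^s + ⟨k - ℓ⟩^s)` bounds `⟨k⟩^s |(a ∗ b)_k|` by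
`2^s ((⟨·⟩^s |a|) ∗ |b| + |a| ∗ (⟨·⟩^s |b|))_k`, and Young's inequality `‖F ∗ H‖_q ≤ ‖F‖₁ ‖H‖_q`
then reduces everything to the embedding `ℓ^q_s ⊂ ℓ¹`, which also makes the convolution sums
absolutely convergent. The embedding is Hölder's inequality against `⟨k⟩^{-s}`, which lies in
`ℓ^{q'}` because `s q' > n`: `⟨k⟩^{-s q'}` is dominated by `∏ᵢ (1 + kᵢ²)^{-s q'/(2n)}`, a product of
convergent one-dimensional series.
-/

open MeasureTheory
open scoped ENNReal NNReal

noncomputable section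

/-- The Japanese bracket `⟨k⟩ = (1+|k|²)^{1/2}` on `ℤⁿ` (with `|k|` the Euclidean norm). -/
def jbZ {n : ℕ} (k : Fin n → ℤ) : ℝ := (1 + ∑ i, ((k i : ℝ)) ^ 2) ^ ((1:ℝ)/2)

/-- The weighted norm `‖a‖_{ℓ^q_s} = (Σ_k ⟨k⟩^{sq} |a_k|^q)^{1/q}` (usual modification for
`q = ∞`), realized as the `L^q` norm of `k ↦ ⟨k⟩^s |a_k|` for the counting measure. -/
def lqsNorm {n : ℕ} (q : ℝ≥0∞) (s : ℝ) (a : (Fin n → ℤ) → ℂ) : ℝ≥0∞ :=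
  eLpNorm (fun k => jbZ k ^ s * ‖a k‖) q Measure.count

lemma ENNReal.HolderConjugate.toReal_inv_eq_one_sub {p q : ℝ≥0∞} [p.HolderConjugate q] :
    q.toReal⁻¹ = 1 - p.toReal⁻¹ := by
  have h := congrArg ENNReal.toReal (ENNReal.HolderConjugate.inv_add_inv_eq_one p q)
  rw [ENNReal.toReal_add (ENNReal.inv_ne_top.2 (ENNReal.HolderConjugate.ne_zero p q))
    (ENNReal.inv_ne_top.2 (ENNReal.HolderConjugate.ne_zero q p)), ENNReal.toReal_inv,
    ENNReal.toReal_inv, ENNReal.toReal_one] at h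
  linarith

lemma sqrt_one_add_norm_sq_add_le {E : Type*} [SeminormedAddGroup E] (x y : E) :
    √(1 + ‖x + y‖ ^ 2) ≤ √(1 + ‖x‖ ^ 2) + √(1 + ‖y‖ ^ 2) := by
  have hx : ‖x‖ ≤ √(1 + ‖x‖ ^ 2) := Real.le_sqrt_of_sq_le (by linarith)
  have hy : ‖y‖ ≤ √(1 + ‖y‖ ^ 2) := Real.le_sqrt_of_sq_le (by linarith)
  calc √(1 + ‖x + y‖ ^ 2) ≤ √(1 + (‖x‖ + ‖y‖) ^ 2) := by
        gcongr; exact norm_add_le x y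
    _ ≤ √(1 + ‖x‖ ^ 2) + ‖y‖ := by
        rw [Real.sqrt_le_left]
        · nlinarith [Real.sq_sqrt (by positivity : (0:ℝ) ≤ 1 + ‖x‖ ^ 2), norm_nonneg y]
        · positivity
    _ ≤ √(1 + ‖x‖ ^ 2) + √(1 + ‖y‖ ^ 2) := by gcongr

/-- Jensen's inequality for `t ↦ t ^ r` and the measure `f μ`, without normalising `f μ`. -/
lemma lintegral_mul_rpow_le {α : Type*} [MeasurableSpace α] {μ : Measure α} {f g : α → ℝ≥0∞}
    (hf : AEMeasurable f μ) (hg : AEMeasurable g μ) {r : ℝ} (hr : 1 ≤ r) :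
    (∫⁻ a, f a * g a ∂μ) ^ r ≤ (∫⁻ a, f a ∂μ) ^ (r - 1) * ∫⁻ a, f a * g a ^ r ∂μ := by
  have hr0 : 0 < r := by linarith
  have hsplit : ∀ a, f a * g a = f a ^ (1 - 1 / r) * (f a * g a ^ r) ^ (1 / r) := fun a => by
    rw [ENNReal.mul_rpow_of_nonneg _ _ (by positivity), ← ENNReal.rpow_mul,
      mul_one_div_cancel hr0.ne', ENNReal.rpow_one, ← mul_assoc,
      ← ENNReal.rpow_add_of_nonneg _ _ (by rw [sub_nonneg, div_le_one hr0]; exact hr)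
        (by positivity), sub_add_cancel, ENNReal.rpow_one]
  have holder : ∫⁻ a, f a * g a ∂μ ≤
      (∫⁻ a, f a ∂μ) ^ (1 - 1 / r) * (∫⁻ a, f a * g a ^ r ∂μ) ^ (1 / r) := by
    simp_rw [hsplit]
    exact ENNReal.lintegral_mul_norm_pow_le hf (hf.mul (hg.pow_const r))
      (by rw [sub_nonneg, div_le_one hr0]; exact hr) (by positivity) (sub_add_cancel _ _)
  calc (∫⁻ a, f a * g a ∂μ) ^ r
      ≤ ((∫⁻ a, f a ∂μ) ^ (1 - 1 / r) * (∫⁻ a, f a * g a ^ r ∂μ) ^ (1 / r)) ^ r := by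
        gcongr
    _ = (∫⁻ a, f a ∂μ) ^ (r - 1) * ∫⁻ a, f a * g a ^ r ∂μ := by
        rw [ENNReal.mul_rpow_of_nonneg _ _ hr0.le, ← ENNReal.rpow_mul, ← ENNReal.rpow_mul,
          one_div_mul_cancel hr0.ne', ENNReal.rpow_one, sub_mul, one_mul,
          one_div_mul_cancel hr0.ne']

section DiscreteConvolution

variable {G : Type*} [AddCommGroup G]

def discreteConv (F H : G → ℝ≥0∞) (k : G) : ℝ≥0∞ := ∑' l, F l * H (k - l)

lemma discreteConv_comm (F H : G → ℝ≥0∞) : discreteConv F H = discreteConv H F := by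
  funext k
  rw [discreteConv, discreteConv, ← (Equiv.subLeft k).tsum_eq]
  simp only [Equiv.subLeft_apply, sub_sub_cancel, mul_comm]

lemma tsum_discreteConv (F H : G → ℝ≥0∞) :
    ∑' k, discreteConv F H k = (∑' l, F l) * ∑' k, H k := by
  calc ∑' k, discreteConv F H k = ∑' l, F l * ∑' k, H (k - l) := by
        simp only [discreteConv]; rw [ENNReal.tsum_comm]; simp_rw [ENNReal.tsum_mul_left]
    _ = ∑' l, F l * ∑' k, H k :=
        tsum_congr fun l => congrArg (F l * ·) ((Equiv.subRight l).tsum_eq H)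
    _ = (∑' l, F l) * ∑' k, H k := ENNReal.tsum_mul_right

variable [MeasurableSpace G] [MeasurableSingletonClass G] [Countable G]

theorem eLpNorm_discreteConv_le {q : ℝ≥0∞} (hq : 1 ≤ q) (F H : G → ℝ≥0∞) :
    eLpNorm (discreteConv F H) q .count ≤ (∑' l, F l) * eLpNorm H q .count := by
  rcases eq_or_ne q ∞ with rfl | hqt
  · simp only [eLpNorm_exponent_top, eLpNormEssSup_count, enorm_eq_self]
    refine iSup_le fun k => ?_
    calc discreteConv F H k ≤ ∑' l, F l * ⨆ j, H j :=
          ENNReal.tsum_le_tsum fun l => mul_le_mul_right (le_iSup H (k - l)) _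
      _ = (∑' l, F l) * ⨆ j, H j := ENNReal.tsum_mul_right
  have hq0 : q ≠ 0 := (zero_lt_one.trans_le hq).ne'
  set r := q.toReal
  have hr : 1 ≤ r := by
    rw [← ENNReal.toReal_one]; exact ENNReal.toReal_mono hqt hq
  have hr0 : r ≠ 0 := by positivity
  have jensen : ∀ k, discreteConv F H k ^ r ≤
      (∑' l, F l) ^ (r - 1) * discreteConv F (fun j => H j ^ r) k := fun k => by
    simpa only [lintegral_count, discreteConv] using
      lintegral_mul_rpow_le (μ := .count) (g := fun l => H (k - l))
        (measurable_of_countable F).aemeasurable (measurable_of_countable _).aemeasurable hr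
  simp only [eLpNorm_eq_lintegral_rpow_enorm_toReal hq0 hqt, enorm_eq_self, lintegral_count]
  calc (∑' k, discreteConv F H k ^ r) ^ (1 / r)
      ≤ (∑' k, (∑' l, F l) ^ (r - 1) * discreteConv F (fun j => H j ^ r) k) ^ (1 / r) := by
        gcongr with k; exact jensen k
    _ = ((∑' l, F l) ^ r * ∑' k, H k ^ r) ^ (1 / r) := by
        rw [ENNReal.tsum_mul_left, tsum_discreteConv, ← mul_assoc]
        congr 2
        nth_rewrite 2 [← ENNReal.rpow_one (∑' l, F l)]
        rw [← ENNReal.rpow_add_of_nonneg _ _ (by linarith) zero_le_one, sub_add_cancel]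
    _ = (∑' l, F l) * (∑' k, H k ^ r) ^ (1 / r) := by
        rw [ENNReal.mul_rpow_of_nonneg _ _ (by positivity), one_div, ENNReal.rpow_rpow_inv hr0]

end DiscreteConvolution

lemma ENNReal.tsum_prod_le_prod_tsum {ι : Type*} [Fintype ι] {κ : ι → Type*}
    (g : ∀ i, κ i → ℝ≥0∞) : ∑' x : ∀ i, κ i, ∏ i, g i (x i) ≤ ∏ i, ∑' j, g i j := by
  classical
  refine ENNReal.summable.tsum_le_of_sum_le fun s => ?_
  calc ∑ x ∈ s, ∏ i, g i (x i)
      ≤ ∑ x ∈ Fintype.piFinset fun i => s.image (· i), ∏ i, g i (x i) :=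
        Finset.sum_le_sum_of_subset fun x hx =>
          Fintype.mem_piFinset.2 fun i => Finset.mem_image_of_mem (· i) hx
    _ = ∏ i, ∑ j ∈ s.image (· i), g i j := (Finset.prod_univ_sum _ _).symm
    _ ≤ ∏ i, ∑' j, g i j := by gcongr with i; exact ENNReal.sum_le_tsum _

lemma tsum_ofReal_one_add_sq_rpow_neg_ne_top {u : ℝ} (hu : 1 / 2 < u) :
    ∑' m : ℤ, ENNReal.ofReal ((1 + (m : ℝ) ^ 2) ^ (-u)) ≠ ∞ := by
  have hsum : Summable fun m : ℤ => (1 + (m : ℝ) ^ 2) ^ (-u) := by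
    refine (Real.summable_abs_int_rpow (b := 2 * u) (by linarith)).of_norm_bounded_eventually ?_
    filter_upwards [Filter.eventually_cofinite_ne 0] with m hm
    have hm2 : 0 < (m : ℝ) ^ 2 := by positivity
    rw [Real.norm_of_nonneg (by positivity)]
    calc (1 + (m : ℝ) ^ 2) ^ (-u) ≤ ((m : ℝ) ^ 2) ^ (-u) :=
          Real.rpow_le_rpow_of_nonpos hm2 (by linarith) (by linarith)
      _ = |(m : ℝ)| ^ (-(2 * u)) := by
          rw [← sq_abs, ← Real.rpow_natCast, ← Real.rpow_mul (abs_nonneg _)]; norm_num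
  rw [← ENNReal.ofReal_tsum_of_nonneg (fun m => by positivity) hsum]
  exact ENNReal.ofReal_ne_top

section JapaneseBracket

variable {n : ℕ}

lemma one_le_jbZ (k : Fin n → ℤ) : 1 ≤ jbZ k :=
  Real.one_le_rpow (le_add_of_nonneg_right (by positivity)) (by norm_num)

lemma jbZ_pos (k : Fin n → ℤ) : 0 < jbZ k := one_pos.trans_le (one_le_jbZ k)

lemma jbZ_eq_sqrt_one_add_norm_sq (k : Fin n → ℤ) :
    jbZ k = √(1 + ‖(WithLp.toLp 2 fun i => (k i : ℝ) : EuclideanSpace ℝ (Fin n))‖ ^ 2) := by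
  rw [jbZ, Real.sqrt_eq_rpow, EuclideanSpace.norm_sq_eq]
  simp [Real.norm_eq_abs, sq_abs]

lemma jbZ_add_le (k l : Fin n → ℤ) : jbZ (k + l) ≤ jbZ k + jbZ l := by
  simp only [jbZ_eq_sqrt_one_add_norm_sq, Pi.add_apply, Int.cast_add]
  exact sqrt_one_add_norm_sq_add_le (WithLp.toLp 2 fun i => (k i : ℝ)) (WithLp.toLp 2 _)

lemma enorm_jbZ_rpow_le {s : ℝ} (hs : 0 ≤ s) (k l : Fin n → ℤ) :
    ‖jbZ k ^ s‖ₑ ≤ 2 ^ s * (‖jbZ l ^ s‖ₑ + ‖jbZ (k - l) ^ s‖ₑ) := by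
  simp only [Real.enorm_rpow_of_nonneg (jbZ_pos _).le hs]
  calc ‖jbZ k‖ₑ ^ s ≤ (‖jbZ l‖ₑ + ‖jbZ (k - l)‖ₑ) ^ s := by
        gcongr
        simp only [Real.enorm_of_nonneg (jbZ_pos _).le,
          ← ENNReal.ofReal_add (jbZ_pos _).le (jbZ_pos _).le]
        exact ENNReal.ofReal_le_ofReal (by simpa using jbZ_add_le l (k - l))
    _ ≤ 2 ^ s * (‖jbZ l‖ₑ ^ s + ‖jbZ (k - l)‖ₑ ^ s) :=
        ENNReal.add_rpow_le_two_rpow_mul_rpow_add_rpow _ _ hs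

lemma jbZ_rpow_neg_le_prod {t u : ℝ} (hu : 0 ≤ u) (htu : 2 * n * u ≤ t) (k : Fin n → ℤ) :
    jbZ k ^ (-t) ≤ ∏ i, (1 + (k i : ℝ) ^ 2) ^ (-u) := by
  set S := 1 + ∑ i, (k i : ℝ) ^ 2
  have hS : 1 ≤ S := le_add_of_nonneg_right (by positivity)
  have hprod : ∏ i, (1 + (k i : ℝ) ^ 2) ≤ S ^ n := by
    calc ∏ i, (1 + (k i : ℝ) ^ 2) ≤ ∏ _i : Fin n, S := by
          gcongr with i
          exact add_le_add_right (Finset.single_le_sum (f := fun i => (k i : ℝ) ^ 2)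
            (fun _ _ => by positivity) (Finset.mem_univ i)) 1
      _ = S ^ n := by simp
  calc jbZ k ^ (-t) = S ^ (-(t / 2)) := by
        rw [jbZ, ← Real.rpow_mul (by positivity)]; congr 1; ring
    _ ≤ S ^ (-(n * u)) := Real.rpow_le_rpow_of_exponent_le hS (by linarith)
    _ = (S ^ n) ^ (-u) := by rw [← Real.rpow_natCast, ← Real.rpow_mul (by positivity), mul_neg]
    _ ≤ (∏ i, (1 + (k i : ℝ) ^ 2)) ^ (-u) :=
        Real.rpow_le_rpow_of_nonpos (Finset.prod_pos fun _ _ => by positivity) hprod (by linarith)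
    _ = ∏ i, (1 + (k i : ℝ) ^ 2) ^ (-u) :=
        (Real.finsetProd_rpow _ _ (fun _ _ => by positivity) _).symm

lemma tsum_ofReal_jbZ_rpow_neg_ne_top {t : ℝ} (ht : n < t) :
    ∑' k : Fin n → ℤ, ENNReal.ofReal (jbZ k ^ (-t)) ≠ ∞ := by
  rcases eq_or_ne n 0 with rfl | hn
  · simp
  set u := t / (2 * n)
  have hu : 1 / 2 < u := by rw [lt_div_iff₀ (by positivity)]; linarith
  have hbound : ∀ k : Fin n → ℤ, ENNReal.ofReal (jbZ k ^ (-t)) ≤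
      ∏ i, ENNReal.ofReal ((1 + (k i : ℝ) ^ 2) ^ (-u)) := fun k => by
    rw [← ENNReal.ofReal_prod_of_nonneg fun _ _ => by positivity]
    exact ENNReal.ofReal_le_ofReal
      (jbZ_rpow_neg_le_prod (by linarith) (by rw [mul_div_cancel₀ _ (by positivity)]) k)
  refine ne_top_of_le_ne_top ?_ ((ENNReal.tsum_le_tsum hbound).trans
    (ENNReal.tsum_prod_le_prod_tsum fun _ (m : ℤ) => ENNReal.ofReal ((1 + (m : ℝ) ^ 2) ^ (-u))))
  rw [Finset.prod_const]
  exact ENNReal.pow_ne_top (tsum_ofReal_one_add_sq_rpow_neg_ne_top hu)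

lemma memLp_jbZ_rpow_neg {p : ℝ≥0∞} {s : ℝ} (hs : n / p.toReal < s) :
    MemLp (fun k : Fin n → ℤ => jbZ k ^ (-s)) p .count := by
  have hmeas : AEStronglyMeasurable (fun k : Fin n → ℤ => jbZ k ^ (-s)) .count :=
    (measurable_of_countable _).aestronglyMeasurable
  rcases eq_or_ne p 0 with rfl | hp0
  · exact memLp_zero_iff_aestronglyMeasurable.2 hmeas
  rcases eq_or_ne p ∞ with rfl | hpt
  · refine memLp_top_of_bound hmeas 1 (ae_of_all _ fun k => ?_)
    -- `(∞ : ℝ≥0∞).toReal = 0` and `n / 0 = 0`, so `hs` reads `0 < s` here, as `n / ∞ = 0` should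
    have hs0 : 0 ≤ s := by simpa using hs.le
    rw [Real.norm_of_nonneg (Real.rpow_nonneg (jbZ_pos k).le _)]
    exact Real.rpow_le_one_of_one_le_of_nonpos (one_le_jbZ k) (by linarith)
  have hp : 0 < p.toReal := ENNReal.toReal_pos hp0 hpt
  refine ⟨hmeas, (eLpNorm_lt_top_iff_lintegral_rpow_enorm_lt_top hp0 hpt).2 ?_⟩
  have hpow : ∀ k : Fin n → ℤ,
      ‖jbZ k ^ (-s)‖ₑ ^ p.toReal = ENNReal.ofReal (jbZ k ^ (-(s * p.toReal))) := fun k => by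
    have h0 := (jbZ_pos k).le
    rw [Real.enorm_of_nonneg (Real.rpow_nonneg h0 _),
      ENNReal.ofReal_rpow_of_nonneg (Real.rpow_nonneg h0 _) hp.le, ← Real.rpow_mul h0, neg_mul]
  simp only [lintegral_count, hpow]
  exact (tsum_ofReal_jbZ_rpow_neg_ne_top (by rwa [div_lt_iff₀ hp] at hs)).lt_top

end JapaneseBracket

lemma summable_mul_sub_of_tsum_enorm_ne_top {G R : Type*} [AddGroup G] [NormedRing R]
    [CompleteSpace R] {a b : G → R} (ha : ∑' l, ‖a l‖ₑ ≠ ∞) (hb : ∑' l, ‖b l‖ₑ ≠ ∞) (k : G) :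
    Summable fun l => a l * b (k - l) := by
  refine Summable.of_enorm (ne_top_of_le_ne_top (ENNReal.mul_ne_top ha hb) ?_)
  calc ∑' l, ‖a l * b (k - l)‖ₑ ≤ ∑' l, ‖a l‖ₑ * ∑' j, ‖b j‖ₑ :=
        ENNReal.tsum_le_tsum fun l => by
          grw [← ENNReal.le_tsum (k - l)]
          exact (ENNReal.coe_le_coe.2 (nnnorm_mul_le _ _)).trans_eq (ENNReal.coe_mul ..)
    _ = (∑' l, ‖a l‖ₑ) * ∑' j, ‖b j‖ₑ := ENNReal.tsum_mul_right

section WeightedSequences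

variable {n : ℕ} {q : ℝ≥0∞}

lemma lqsNorm_eq_eLpNorm (s : ℝ) (a : (Fin n → ℤ) → ℂ) :
    lqsNorm q s a = eLpNorm (fun k => ‖jbZ k ^ s‖ₑ * ‖a k‖ₑ) q .count := by
  rw [lqsNorm, ← eLpNorm_enorm]
  simp only [enorm_mul, enorm_norm]

lemma tsum_enorm_le_mul_lqsNorm (hq : 1 ≤ q) (s : ℝ) (a : (Fin n → ℤ) → ℂ) :
    ∑' k, ‖a k‖ₑ ≤
      eLpNorm (fun k : Fin n → ℤ => jbZ k ^ (-s)) q.conjExponent .count * lqsNorm q s a := by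
  have := (ENNReal.HolderConjugate.conjExponent hq).symm
  have hfactor : ∀ k, jbZ k ^ (-s) * (jbZ k ^ s * ‖a k‖) = ‖a k‖ := fun k => by
    rw [Real.rpow_neg (jbZ_pos k).le, inv_mul_cancel_left₀ (Real.rpow_pos_of_pos (jbZ_pos k) s).ne']
  calc ∑' k, ‖a k‖ₑ = eLpNorm (fun k => jbZ k ^ (-s) * (jbZ k ^ s * ‖a k‖)) 1 .count := by
        simp only [hfactor, eLpNorm_one_eq_lintegral_enorm, lintegral_count, enorm_norm]
    _ ≤ 1 * eLpNorm (fun k => jbZ k ^ (-s)) q.conjExponent .count * lqsNorm q s a :=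
        eLpNorm_le_eLpNorm_mul_eLpNorm'_of_norm (measurable_of_countable _).aestronglyMeasurable
          (measurable_of_countable _).aestronglyMeasurable (· * ·) 1
          (ae_of_all _ fun k => by simp [norm_mul])
    _ = eLpNorm (fun k => jbZ k ^ (-s)) q.conjExponent .count * lqsNorm q s a := by
        rw [one_mul]

lemma lqsNorm_conv_le {s : ℝ} (hq : 1 ≤ q) (hs : 0 ≤ s) (a b : (Fin n → ℤ) → ℂ) :
    lqsNorm q s (fun k => ∑' l, a l * b (k - l)) ≤
      2 ^ s * ((∑' l, ‖b l‖ₑ) * lqsNorm q s a + (∑' l, ‖a l‖ₑ) * lqsNorm q s b) := by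
  set w : (Fin n → ℤ) → ℝ≥0∞ := fun k => ‖jbZ k ^ s‖ₑ
  set A : (Fin n → ℤ) → ℝ≥0∞ := fun k => ‖a k‖ₑ
  set B : (Fin n → ℤ) → ℝ≥0∞ := fun k => ‖b k‖ₑ
  have hpt : ∀ k, w k * ‖∑' l, a l * b (k - l)‖ₑ ≤
      2 ^ s * (discreteConv (fun l => w l * A l) B k + discreteConv A (fun l => w l * B l) k) :=
    fun k => calc
      w k * ‖∑' l, a l * b (k - l)‖ₑ ≤ ∑' l, w k * (A l * B (k - l)) := by
        rw [ENNReal.tsum_mul_left]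
        gcongr
        exact enorm_tsum_le_tsum_enorm.trans_eq (tsum_congr fun l => enorm_mul _ _)
      _ ≤ ∑' l, 2 ^ s * (w l + w (k - l)) * (A l * B (k - l)) :=
        ENNReal.tsum_le_tsum fun l => by gcongr; exact enorm_jbZ_rpow_le hs k l
      _ = 2 ^ s * (discreteConv (fun l => w l * A l) B k +
            discreteConv A (fun l => w l * B l) k) := by
        rw [discreteConv, discreteConv, ← ENNReal.tsum_add, ← ENNReal.tsum_mul_left]
        exact tsum_congr fun l => by ring
  have hmeas : ∀ f : (Fin n → ℤ) → ℝ≥0∞, AEStronglyMeasurable f .count :=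
    fun f => (measurable_of_countable f).aestronglyMeasurable
  rw [lqsNorm_eq_eLpNorm, lqsNorm_eq_eLpNorm, lqsNorm_eq_eLpNorm]
  calc eLpNorm (fun k => w k * ‖∑' l, a l * b (k - l)‖ₑ) q .count
      ≤ 2 ^ s * eLpNorm (discreteConv (fun l => w l * A l) B + discreteConv A (fun l => w l * B l))
          q .count :=
        eLpNorm_le_mul_eLpNorm_of_ae_le_mul'' q (hmeas _) (ae_of_all _ hpt)
    _ ≤ 2 ^ s * (eLpNorm (discreteConv (fun l => w l * A l) B) q .count +
          eLpNorm (discreteConv A (fun l => w l * B l)) q .count) := by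
        gcongr; exact eLpNorm_add_le (hmeas _) (hmeas _) hq
    _ ≤ 2 ^ s * ((∑' l, B l) * eLpNorm (fun l => w l * A l) q .count +
          (∑' l, A l) * eLpNorm (fun l => w l * B l) q .count) := by
        rw [discreteConv_comm]
        gcongr <;> exact eLpNorm_discreteConv_le hq _ _

end WeightedSequences

theorem lqs_convolution_algebra_general (n : ℕ) (q : ℝ≥0∞) (s : ℝ)
    (hq : 1 ≤ q) (hs : (n : ℝ) * (1 - 1 / q.toReal) < s) :
    ∃ C : ℝ≥0, 0 < C ∧ ∀ a b : (Fin n → ℤ) → ℂ,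
      lqsNorm q s a < ∞ → lqsNorm q s b < ∞ →
      (∀ k, Summable fun ℓ => a ℓ * b (k - ℓ)) ∧
      lqsNorm q s (fun k => ∑' ℓ, a ℓ * b (k - ℓ)) ≤ C * lqsNorm q s a * lqsNorm q s b := by
  have := ENNReal.HolderConjugate.conjExponent hq
  have hs' : n / q.conjExponent.toReal < s := by
    rwa [div_eq_mul_inv, ENNReal.HolderConjugate.toReal_inv_eq_one_sub (p := q), ← one_div]
  have hs0 : 0 ≤ s := (div_nonneg n.cast_nonneg ENNReal.toReal_nonneg).trans hs'.le
  set C₁ := eLpNorm (fun k : Fin n → ℤ => jbZ k ^ (-s)) q.conjExponent .count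
  have hC₁ : C₁ ≠ ∞ := (memLp_jbZ_rpow_neg hs').eLpNorm_ne_top
  refine ⟨2 * 2 ^ s * C₁.toNNReal + 1, by positivity, fun a b ha hb => ?_⟩
  have hA := tsum_enorm_le_mul_lqsNorm hq s a
  have hB := tsum_enorm_le_mul_lqsNorm hq s b
  refine ⟨summable_mul_sub_of_tsum_enorm_ne_top
    (ne_top_of_le_ne_top (ENNReal.mul_ne_top hC₁ ha.ne) hA)
    (ne_top_of_le_ne_top (ENNReal.mul_ne_top hC₁ hb.ne) hB), ?_⟩
  calc lqsNorm q s (fun k => ∑' ℓ, a ℓ * b (k - ℓ))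
      ≤ 2 ^ s * ((∑' l, ‖b l‖ₑ) * lqsNorm q s a + (∑' l, ‖a l‖ₑ) * lqsNorm q s b) :=
        lqsNorm_conv_le hq hs0 a b
    _ ≤ 2 ^ s * (C₁ * lqsNorm q s b * lqsNorm q s a + C₁ * lqsNorm q s a * lqsNorm q s b) := by
        gcongr
    _ = 2 * 2 ^ s * C₁ * lqsNorm q s a * lqsNorm q s b := by ring
    _ ≤ ((2 * 2 ^ s * C₁.toNNReal + 1 : ℝ≥0) : ℝ≥0∞) * lqsNorm q s a * lqsNorm q s b := by
        rw [ENNReal.coe_add, ENNReal.coe_mul, ENNReal.coe_mul, ENNReal.coe_rpow_of_nonneg _ hs0,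
          ENNReal.coe_toNNReal hC₁]
        gcongr
        exact le_self_add

/-- For `1 ≤ q ≤ ∞`, `s ≥ 0`, `s > n/q′`, the space `ℓ^q_s(ℤⁿ)` is a
convolution algebra: for `a, b ∈ ℓ^q_s` the convolution `(a∗b)_k = Σ_ℓ a_ℓ b_{k−ℓ}` is
well-defined and `‖a∗b‖_{ℓ^q_s} ≤ C ‖a‖_{ℓ^q_s} ‖b‖_{ℓ^q_s}`. -/
theorem lqs_convolution_algebra (n : ℕ) (q : ℝ≥0∞) (s : ℝ)
    (hq : 1 ≤ q) (hs0 : 0 ≤ s) (hs : (n : ℝ) * (1 - 1 / q.toReal) < s) :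
    ∃ C : ℝ≥0, 0 < C ∧ ∀ a b : (Fin n → ℤ) → ℂ,
      lqsNorm q s a < ∞ → lqsNorm q s b < ∞ →
      (∀ k, Summable fun ℓ => a ℓ * b (k - ℓ)) ∧
      lqsNorm q s (fun k => ∑' ℓ, a ℓ * b (k - ℓ)) ≤ C * lqsNorm q s a * lqsNorm q s b :=
  lqs_convolution_algebra_general n q s hq hs
end
end

section
/- Let 1 < q ≤ ∞ and s ∈ ℝ. If the convolution embedding ℓ^q_s(ℤⁿ) ∗ ℓ^q_s(ℤⁿ) ↪ ℓ^q_s(ℤⁿ) holds, i.e., there exists C > 0 such that ‖a∗b‖_{ℓ^q_s} ≤ C‖a‖_{ℓ^q_s}‖b‖_{ℓ^q_s} for all finitely supported nonnegative sequences a, b on ℤⁿ, then necessarily s > n/q′. -/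
open MeasureTheory
open scoped ENNReal NNReal

noncomputable section

/-- The weighted norm `‖a‖_{ℓ^q_s}` for real-valued sequences on `ℤⁿ`. -/
def lqsNormR {n : ℕ} (q : ℝ≥0∞) (s : ℝ) (a : (Fin n → ℤ) → ℝ) : ℝ≥0∞ :=
  eLpNorm (fun k => jbZ k ^ s * |a k|) q Measure.count

/-!
Suppose `s ≤ n/q'`, i.e. `σ := s + n/q ≤ n`, and test the inequality on `a = ⟨k⟩^{-σ}` restricted to
`[-N, N]ⁿ` and on `b` the indicator of `[N, 5N]ⁿ`. On `[N, 5N]ⁿ` the weight `⟨k⟩^s` is constant up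
to a factor `5^{|s|}`, and on the subcube `[2N, 3N]ⁿ`, which holds at least a `5^{-n}` fraction of
its points, `a ∗ b` equals `A = Σ_{[-N,N]ⁿ} ⟨k⟩^{-σ}`. Hence `A ≲ ‖a‖ = S^{1/q}` with
`S = Σ_{[-N,N]ⁿ} ⟨k⟩^{-n} ≤ A`, so `S^{1/q'}` stays bounded in `N`. But `S` diverges like `log N`:
the `mⁿ⁻¹` points of the shell `{m} × [0, m)ⁿ⁻¹` together contribute `≍ 1/m`.
For `q = ∞` everything is read with `1/q = 0`, which is also the value of `1 / q.toReal` there.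
-/

namespace MeasureTheory

variable {α : Type*} [MeasurableSpace α] [MeasurableSingletonClass α] {f : α → ℝ} {c : ℝ}

lemma ofReal_mul_card_rpow_eq_enorm_mul (hc0 : 0 ≤ c) (t : Finset α) (q : ℝ≥0∞) :
    ENNReal.ofReal (c * (t.card : ℝ) ^ (1 / q.toReal))
      = ‖c‖ₑ * Measure.count (t : Set α) ^ (1 / q.toReal) := by
  rw [Measure.count_apply_finset, ENNReal.ofReal_mul hc0, ← ofReal_norm,
    Real.norm_of_nonneg hc0, ← ENNReal.ofReal_natCast,
    ENNReal.ofReal_rpow_of_nonneg (Nat.cast_nonneg _) (by positivity)]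

lemma eLpNorm_count_le_ofReal_mul_card_rpow {t : Finset α} (hsupp : f.support ⊆ t)
    (hc0 : 0 ≤ c) (hc : ∀ k ∈ t, |f k| ≤ c) (q : ℝ≥0∞) :
    eLpNorm f q Measure.count ≤ ENNReal.ofReal (c * (t.card : ℝ) ^ (1 / q.toReal)) := by
  calc eLpNorm f q Measure.count
      ≤ eLpNorm ((t : Set α).indicator fun _ => c) q Measure.count := eLpNorm_mono fun k => by
        by_cases hk : k ∈ t
        · simpa [hk, abs_of_nonneg hc0] using hc k hk
        · simp [hk, Function.notMem_support.mp fun h => hk (hsupp h)]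
    _ ≤ _ := by
      rw [ofReal_mul_card_rpow_eq_enorm_mul hc0]
      exact eLpNorm_indicator_const_le c q

lemma ofReal_mul_card_rpow_le_eLpNorm_count {M : Finset α} (hM : M.Nonempty) (hc0 : 0 ≤ c)
    (hc : ∀ k ∈ M, c ≤ |f k|) {q : ℝ≥0∞} (hq : q ≠ 0) :
    ENNReal.ofReal (c * (M.card : ℝ) ^ (1 / q.toReal)) ≤ eLpNorm f q Measure.count := by
  calc ENNReal.ofReal (c * (M.card : ℝ) ^ (1 / q.toReal))
      = eLpNorm ((M : Set α).indicator fun _ => c) q Measure.count := by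
        rw [eLpNorm_indicator_const' M.measurableSet (by simpa using hM.ne_empty) hq,
          ofReal_mul_card_rpow_eq_enorm_mul hc0]
    _ ≤ eLpNorm f q Measure.count := eLpNorm_mono fun k => by
        by_cases hk : k ∈ M
        · simpa [hk, abs_of_nonneg hc0] using hc k hk
        · simp [hk]

lemma eLpNorm_count_eq_ofReal_sum {t : Finset α} (hsupp : f.support ⊆ t) {q : ℝ≥0∞}
    (hq0 : q ≠ 0) (hq : q ≠ ∞) :
    eLpNorm f q Measure.count
      = ENNReal.ofReal ((∑ k ∈ t, |f k| ^ q.toReal) ^ (1 / q.toReal)) := by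
  have hp : 0 < q.toReal := ENNReal.toReal_pos hq0 hq
  rw [eLpNorm_eq_lintegral_rpow_enorm_toReal hq0 hq, lintegral_count,
    tsum_eq_sum (s := t) fun k hk => by
      simp [Function.notMem_support.mp fun h => hk (hsupp h), hp],
    ← ENNReal.ofReal_rpow_of_nonneg (by positivity) (by positivity),
    ENNReal.ofReal_sum_of_nonneg fun k _ => by positivity]
  congr 1
  refine Finset.sum_congr rfl fun k _ => ?_
  rw [← ofReal_norm, Real.norm_eq_abs, ENNReal.ofReal_rpow_of_nonneg (abs_nonneg _) hp.le]

end MeasureTheory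

lemma Real.rpow_le_mul_rpow_of_le_mul {x y c : ℝ} (hx : 0 < x) (hy : 0 < y)
    (hxy : x ≤ c * y) (hyx : y ≤ c * x) (t : ℝ) : x ^ t ≤ c ^ |t| * y ^ t := by
  have hc : 0 < c := pos_of_mul_pos_left (hx.trans_le hxy) hy.le
  rcases le_or_gt 0 t with ht | ht
  · rw [abs_of_nonneg ht, ← Real.mul_rpow hc.le hy.le]
    exact Real.rpow_le_rpow hx.le hxy ht
  · have : (c * x) ^ t ≤ y ^ t := Real.rpow_le_rpow_of_nonpos hy hyx ht.le
    rw [Real.mul_rpow hc.le hx.le] at this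
    calc x ^ t = c ^ (-t) * (c ^ t * x ^ t) := by
          rw [← mul_assoc, ← Real.rpow_add hc, neg_add_cancel, Real.rpow_zero, one_mul]
      _ ≤ c ^ |t| * y ^ t := by
          rw [abs_of_neg ht]; exact mul_le_mul_of_nonneg_left this (by positivity)

lemma Real.rpow_one_sub_le_of_le_mul_rpow {x K θ : ℝ} (hx : 0 < x) (h : x ≤ K * x ^ θ) :
    x ^ (1 - θ) ≤ K := by
  rwa [Real.rpow_sub hx, Real.rpow_one, div_le_iff₀ (Real.rpow_pos_of_pos hx θ)]

section JapaneseBracket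

variable {n : ℕ}

lemma jbZ_eq_sqrt (k : Fin n → ℤ) : jbZ k = √(1 + ∑ i, ((k i : ℝ)) ^ 2) := by
  rw [jbZ, Real.sqrt_eq_rpow]

lemma jbZ_rpow_pos (k : Fin n → ℤ) (s : ℝ) : 0 < jbZ k ^ s := Real.rpow_pos_of_pos (jbZ_pos k) s

lemma jbZ_le_mul_jbZ {c : ℝ} (hc : 1 ≤ c) {k k' : Fin n → ℤ}
    (h : ∀ i, |(k i : ℝ)| ≤ c * |(k' i : ℝ)|) : jbZ k ≤ c * jbZ k' := by
  have hsq : ∀ i, ((k i : ℝ)) ^ 2 ≤ c ^ 2 * ((k' i : ℝ)) ^ 2 := fun i => by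
    rw [← sq_abs, ← sq_abs (k' i : ℝ), ← mul_pow]
    exact pow_le_pow_left₀ (abs_nonneg _) (h i) 2
  have hsum : 1 + ∑ i, ((k i : ℝ)) ^ 2 ≤ c ^ 2 * (1 + ∑ i, ((k' i : ℝ)) ^ 2) := by
    rw [mul_add, mul_one, Finset.mul_sum]
    gcongr with i
    · nlinarith
    · exact hsq i
  rw [jbZ_eq_sqrt, jbZ_eq_sqrt, ← Real.sqrt_sq (zero_le_one.trans hc),
    ← Real.sqrt_mul (by positivity)]
  exact Real.sqrt_le_sqrt hsum

end JapaneseBracket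

section Cubes

variable {n : ℕ}

def cube (n : ℕ) (lo hi : ℤ) : Finset (Fin n → ℤ) := Fintype.piFinset fun _ => Finset.Icc lo hi

lemma mem_cube {lo hi : ℤ} {k : Fin n → ℤ} : k ∈ cube n lo hi ↔ ∀ i, lo ≤ k i ∧ k i ≤ hi := by
  simp [cube]

lemma card_cube (lo hi : ℤ) : (cube n lo hi).card = (hi + 1 - lo).toNat ^ n := by
  simp [cube]

lemma card_cube_le (N : ℕ) :
    ((cube n N (5 * N)).card : ℝ) ≤ 5 ^ n * (cube n (2 * N) (3 * N)).card := by
  have : (cube n N (5 * N)).card ≤ 5 ^ n * (cube n (2 * N) (3 * N)).card := by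
    rw [card_cube, card_cube, ← mul_pow]
    exact Nat.pow_le_pow_left (by omega) n
  exact_mod_cast this

lemma cube_nonempty {lo hi : ℤ} (h : lo ≤ hi) : (cube n lo hi).Nonempty :=
  ⟨fun _ => lo, mem_cube.mpr fun _ => ⟨le_rfl, h⟩⟩

lemma jbZ_le_five_mul_jbZ {N : ℕ} {k k' : Fin n → ℤ} (hk : k ∈ cube n N (5 * N))
    (hk' : k' ∈ cube n N (5 * N)) : jbZ k ≤ 5 * jbZ k' := by
  refine jbZ_le_mul_jbZ (by norm_num) fun i => ?_
  have := mem_cube.mp hk i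
  have := mem_cube.mp hk' i
  rw [abs_of_nonneg (by exact_mod_cast (by omega : (0 : ℤ) ≤ k i)),
    abs_of_nonneg (by exact_mod_cast (by omega : (0 : ℤ) ≤ k' i))]
  exact_mod_cast (by omega : k i ≤ 5 * k' i)

lemma jbZ_rpow_le_mul_jbZ_rpow {N : ℕ} {k k' : Fin n → ℤ} (hk : k ∈ cube n N (5 * N))
    (hk' : k' ∈ cube n N (5 * N)) (s : ℝ) : jbZ k ^ s ≤ 5 ^ |s| * jbZ k' ^ s :=
  Real.rpow_le_mul_rpow_of_le_mul (jbZ_pos k) (jbZ_pos k')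
    (jbZ_le_five_mul_jbZ hk hk') (jbZ_le_five_mul_jbZ hk' hk) s

end Cubes

section TestSequences

variable {n : ℕ}

def cubePower (n : ℕ) (σ : ℝ) (N : ℕ) : (Fin n → ℤ) → ℝ :=
  (cube n (-N) N : Set (Fin n → ℤ)).indicator fun k => jbZ k ^ (-σ)

def cubeIndicator (n N : ℕ) : (Fin n → ℤ) → ℝ :=
  (cube n N (5 * N) : Set (Fin n → ℤ)).indicator 1

def cubeSum (n : ℕ) (σ : ℝ) (N : ℕ) : ℝ := ∑ k ∈ cube n (-N) N, jbZ k ^ (-σ)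

lemma cubeSum_pos (σ : ℝ) (N : ℕ) : 0 < cubeSum n σ N :=
  Finset.sum_pos (fun k _ => jbZ_rpow_pos k _) (cube_nonempty (by omega))

lemma cubeSum_le_cubeSum {σ τ : ℝ} (h : σ ≤ τ) (N : ℕ) : cubeSum n τ N ≤ cubeSum n σ N :=
  Finset.sum_le_sum fun k _ => Real.rpow_le_rpow_of_exponent_le (one_le_jbZ k) (neg_le_neg h)

lemma tsum_cubePower_mul_cubeIndicator {σ : ℝ} {N : ℕ} {k : Fin n → ℤ}
    (hk : k ∈ cube n (2 * N) (3 * N)) :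
    ∑' ℓ, cubePower n σ N ℓ * cubeIndicator n N (k - ℓ) = cubeSum n σ N := by
  rw [tsum_eq_sum (s := cube n (-N) N) fun ℓ hℓ => by simp [cubePower, hℓ]]
  refine Finset.sum_congr rfl fun ℓ hℓ => ?_
  have hkℓ : k - ℓ ∈ cube n N (5 * N) := mem_cube.mpr fun i => by
    have := mem_cube.mp hk i
    have := mem_cube.mp hℓ i
    simp only [Pi.sub_apply]
    omega
  simp [cubePower, cubeIndicator, hℓ, hkℓ]

lemma lqsNormR_cubePower_le {q : ℝ≥0∞} (hq : q ≠ 0) (s : ℝ) (N : ℕ) :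
    lqsNormR q s (cubePower n (s + n / q.toReal) N)
      ≤ ENNReal.ofReal (cubeSum n n N ^ (1 / q.toReal)) := by
  have hsupp : (fun k => jbZ k ^ s * |cubePower n (s + n / q.toReal) N k|).support
      ⊆ cube n (-N) N := fun k hk => by
    by_contra h
    simp [cubePower, h] at hk
  rcases eq_or_ne q ∞ with rfl | hqtop
  · have := eLpNorm_count_le_ofReal_mul_card_rpow hsupp zero_le_one (fun k hk => by
      simp [cubePower, hk, abs_of_nonneg (jbZ_rpow_pos k _).le,
        ← Real.rpow_add (jbZ_pos k)]) ∞
    simp only [ENNReal.toReal_top, div_zero, Real.rpow_zero, mul_one] at this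
    simpa [lqsNormR] using this
  · have hp : 0 < q.toReal := ENNReal.toReal_pos hq hqtop
    refine (eLpNorm_count_eq_ofReal_sum hsupp hq hqtop).le.trans_eq ?_
    rw [cubeSum]
    congr 2
    refine Finset.sum_congr rfl fun k hk => ?_
    have hk' : jbZ k ^ s * |cubePower n (s + n / q.toReal) N k| = jbZ k ^ (-n / q.toReal) := by
      rw [cubePower, Set.indicator_of_mem (by exact_mod_cast hk),
        abs_of_nonneg (jbZ_rpow_pos k _).le, ← Real.rpow_add (jbZ_pos k)]
      ring_nf
    rw [hk', abs_of_nonneg (jbZ_rpow_pos k _).le, ← Real.rpow_mul (jbZ_pos k).le,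
      div_mul_cancel₀ _ hp.ne']

lemma lqsNormR_cubeIndicator_le (q : ℝ≥0∞) (s : ℝ) (N : ℕ) :
    lqsNormR q s (cubeIndicator n N) ≤ ENNReal.ofReal
      (5 ^ |s| * jbZ (fun _ : Fin n => (N : ℤ)) ^ s
        * ((cube n N (5 * N)).card : ℝ) ^ (1 / q.toReal)) := by
  have hk₀ : (fun _ : Fin n => (N : ℤ)) ∈ cube n N (5 * N) := mem_cube.mpr fun _ => by omega
  refine eLpNorm_count_le_ofReal_mul_card_rpow (fun k hk => ?_)
    (mul_nonneg (by positivity) (jbZ_rpow_pos _ s).le) (fun k hk => ?_) q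
  · by_contra h
    simp [cubeIndicator, h] at hk
  · rw [cubeIndicator, Set.indicator_of_mem hk, Pi.one_apply, abs_one, mul_one,
      abs_of_nonneg (jbZ_rpow_pos k _).le]
    exact jbZ_rpow_le_mul_jbZ_rpow hk hk₀ s

lemma ofReal_le_lqsNormR_convolution {q : ℝ≥0∞} (hq : q ≠ 0) (s σ : ℝ) (N : ℕ) :
    ENNReal.ofReal ((5 ^ |s|)⁻¹ * jbZ (fun _ : Fin n => (N : ℤ)) ^ s * cubeSum n σ N
        * ((cube n (2 * N) (3 * N)).card : ℝ) ^ (1 / q.toReal))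
      ≤ lqsNormR q s (fun k => ∑' ℓ, cubePower n σ N ℓ * cubeIndicator n N (k - ℓ)) := by
  have hk₀ : (fun _ : Fin n => (N : ℤ)) ∈ cube n N (5 * N) := mem_cube.mpr fun _ => by omega
  refine ofReal_mul_card_rpow_le_eLpNorm_count (cube_nonempty (by omega))
    (mul_nonneg (mul_nonneg (by positivity) (jbZ_rpow_pos _ s).le) (cubeSum_pos σ N).le)
    (fun k hk => ?_) hq
  have hkQ : k ∈ cube n N (5 * N) := mem_cube.mpr fun i => by
    have := mem_cube.mp hk i
    omega
  dsimp only
  rw [tsum_cubePower_mul_cubeIndicator hk, abs_of_nonneg (cubeSum_pos σ N).le,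
    abs_of_nonneg (mul_nonneg (jbZ_rpow_pos k _).le (cubeSum_pos σ N).le)]
  refine mul_le_mul_of_nonneg_right ?_ (cubeSum_pos σ N).le
  rw [inv_mul_le_iff₀ (by positivity)]
  exact jbZ_rpow_le_mul_jbZ_rpow hk₀ hkQ s

end TestSequences

section Divergence

variable {d : ℕ}

def shell (d m : ℕ) : Finset (Fin (d + 1) → ℤ) :=
  Fintype.piFinset (Fin.cons {(m : ℤ)} fun _ => Finset.Icc 0 ((m : ℤ) - 1))

lemma card_shell (d m : ℕ) : (shell d m).card = m ^ d := by
  simp [shell, Fintype.card_piFinset, Fin.prod_univ_succ]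

lemma apply_zero_of_mem_shell {m : ℕ} {k : Fin (d + 1) → ℤ} (hk : k ∈ shell d m) : k 0 = m := by
  simpa [shell] using Fintype.mem_piFinset.mp hk 0

lemma shell_subset_cube (d m : ℕ) : shell d m ⊆ cube (d + 1) 0 m := fun k hk =>
  mem_cube.mpr fun i => by
    have := Fintype.mem_piFinset.mp hk i
    cases i using Fin.cases <;> simp_all; omega

lemma inv_div_le_sum_shell {m : ℕ} (hm : 1 ≤ m) :
    (jbZ (1 : Fin (d + 1) → ℤ) ^ (d + 1))⁻¹ / m ≤ ∑ k ∈ shell d m, jbZ k ^ (-(d + 1 : ℝ)) := by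
  have hterm : ∀ k ∈ shell d m,
      ((m * jbZ (1 : Fin (d + 1) → ℤ)) ^ (d + 1))⁻¹ ≤ jbZ k ^ (-(d + 1 : ℝ)) := fun k hk => by
    have hle : jbZ k ≤ m * jbZ (1 : Fin (d + 1) → ℤ) := jbZ_le_mul_jbZ (by exact_mod_cast hm)
      fun i => by
        have := mem_cube.mp (shell_subset_cube d m hk) i
        rw [abs_of_nonneg (by exact_mod_cast this.1)]
        simpa using (Int.cast_le (R := ℝ)).mpr this.2
    rw [Real.rpow_neg (jbZ_pos k).le, ← Nat.cast_succ, Real.rpow_natCast]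
    exact inv_anti₀ (pow_pos (jbZ_pos k) _) (pow_le_pow_left₀ (jbZ_pos k).le hle _)
  calc (jbZ (1 : Fin (d + 1) → ℤ) ^ (d + 1))⁻¹ / m
      = (shell d m).card * ((m * jbZ (1 : Fin (d + 1) → ℤ)) ^ (d + 1))⁻¹ := by
        have : (m : ℝ) ≠ 0 := by positivity
        have : jbZ (1 : Fin (d + 1) → ℤ) ≠ 0 := (jbZ_pos _).ne'
        rw [card_shell]
        push_cast
        field_simp
        ring
    _ ≤ ∑ k ∈ shell d m, jbZ k ^ (-(d + 1 : ℝ)) := by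
        rw [← nsmul_eq_mul]
        exact Finset.card_nsmul_le_sum _ _ _ hterm

lemma inv_mul_harmonic_le_cubeSum (d N : ℕ) :
    (jbZ (1 : Fin (d + 1) → ℤ) ^ (d + 1))⁻¹ * ∑ i ∈ Finset.range N, 1 / ((i : ℝ) + 1)
      ≤ cubeSum (d + 1) (d + 1 : ℕ) N := by
  have hdisj : (Finset.range N : Set ℕ).PairwiseDisjoint fun i => shell d (i + 1) :=
    fun i _ j _ hij => Finset.disjoint_left.mpr fun k hki hkj => hij <| by
      have := (apply_zero_of_mem_shell hki).symm.trans (apply_zero_of_mem_shell hkj)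
      omega
  have hsub : (Finset.range N).disjiUnion (fun i => shell d (i + 1)) hdisj ⊆ cube (d + 1) (-N) N :=
    fun k hk => by
      obtain ⟨i, hi, hki⟩ := Finset.mem_disjiUnion.mp hk
      refine mem_cube.mpr fun j => ?_
      have := mem_cube.mp (shell_subset_cube d _ hki) j
      have := Finset.mem_range.mp hi
      omega
  calc (jbZ (1 : Fin (d + 1) → ℤ) ^ (d + 1))⁻¹ * ∑ i ∈ Finset.range N, 1 / ((i : ℝ) + 1)
      = ∑ i ∈ Finset.range N, (jbZ (1 : Fin (d + 1) → ℤ) ^ (d + 1))⁻¹ / ((i + 1 : ℕ) : ℝ) := by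
        rw [Finset.mul_sum]
        push_cast
        simp only [mul_one_div]
    _ ≤ ∑ i ∈ Finset.range N, ∑ k ∈ shell d (i + 1), jbZ k ^ (-(d + 1 : ℝ)) :=
        Finset.sum_le_sum fun i _ => inv_div_le_sum_shell (by omega)
    _ = ∑ k ∈ (Finset.range N).disjiUnion (fun i => shell d (i + 1)) hdisj,
          jbZ k ^ (-(d + 1 : ℝ)) := (Finset.sum_disjiUnion _ _ _).symm
    _ ≤ cubeSum (d + 1) (d + 1 : ℕ) N := by
        rw [cubeSum]
        push_cast
        exact Finset.sum_le_sum_of_subset_of_nonneg hsub fun k _ _ => (jbZ_rpow_pos k _).le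

lemma tendsto_cubeSum_atTop {n : ℕ} (hn : 0 < n) :
    Filter.Tendsto (fun N : ℕ => cubeSum n n N) Filter.atTop Filter.atTop := by
  obtain ⟨d, rfl⟩ := Nat.exists_eq_add_one_of_ne_zero hn.ne'
  exact Filter.tendsto_atTop_mono (inv_mul_harmonic_le_cubeSum d)
    (Real.tendsto_sum_range_one_div_nat_succ_atTop.const_mul_atTop
      (inv_pos.mpr (pow_pos (jbZ_pos _) _)))

end Divergence

def ConvolutionInequality (n : ℕ) (q : ℝ≥0∞) (s : ℝ) (C : ℝ≥0) : Prop :=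
  ∀ a b : (Fin n → ℤ) → ℝ, (Function.support a).Finite → (Function.support b).Finite →
    (∀ k, 0 ≤ a k) → (∀ k, 0 ≤ b k) →
    lqsNormR q s (fun k => ∑' ℓ, a ℓ * b (k - ℓ)) ≤ C * lqsNormR q s a * lqsNormR q s b

lemma ConvolutionInequality.cubeSum_le {n : ℕ} {q : ℝ≥0∞} {s : ℝ} {C : ℝ≥0}
    (hC : ConvolutionInequality n q s C) (hq : q ≠ 0) (N : ℕ) :
    cubeSum n (s + n / q.toReal) N
      ≤ C * (5 ^ |s|) ^ 2 * ((5 : ℝ) ^ n) ^ (1 / q.toReal) * cubeSum n n N ^ (1 / q.toReal) := by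
  set p := q.toReal
  set σ := s + n / p
  set c : ℝ := 5 ^ |s|
  set W := jbZ (fun _ : Fin n => (N : ℤ)) ^ s
  set m : ℝ := ((cube n (2 * N) (3 * N)).card : ℝ)
  set m' : ℝ := ((cube n N (5 * N)).card : ℝ)
  set A := cubeSum n σ N
  set S := cubeSum n n N
  have hp : 0 ≤ p := ENNReal.toReal_nonneg
  have hc : 0 < c := by positivity
  have hS : 0 < S := cubeSum_pos _ N
  have hW : 0 < W := jbZ_rpow_pos _ s
  have hm : 0 < m := by
    simpa [m] using (cube_nonempty (n := n) (by omega : (2 * N : ℤ) ≤ 3 * N)).card_pos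
  have hm' : m' ^ (1 / p) ≤ ((5 : ℝ) ^ n) ^ (1 / p) * m ^ (1 / p) := by
    rw [← Real.mul_rpow (by positivity) hm.le]
    exact Real.rpow_le_rpow (by positivity) (card_cube_le N) (by positivity)
  have hnorms := (ofReal_le_lqsNormR_convolution hq s σ N).trans <|
    (hC _ _ ((Finset.finite_toSet _).subset Set.support_indicator_subset)
      ((Finset.finite_toSet _).subset Set.support_indicator_subset)
      (Set.indicator_nonneg fun k _ => (jbZ_rpow_pos k _).le)
      (Set.indicator_nonneg fun _ _ => zero_le_one)).trans
    (mul_le_mul' (mul_le_mul' le_rfl (lqsNormR_cubePower_le hq s N))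
      (lqsNormR_cubeIndicator_le q s N))
  rw [← ENNReal.ofReal_coe_nnreal, ← ENNReal.ofReal_mul C.coe_nonneg,
    ← ENNReal.ofReal_mul (by positivity), ENNReal.ofReal_le_ofReal_iff (by positivity)] at hnorms
  refine le_of_mul_le_mul_left ?_ (by positivity : 0 < c⁻¹ * W * m ^ (1 / p))
  calc c⁻¹ * W * m ^ (1 / p) * A = c⁻¹ * W * A * m ^ (1 / p) := by ring
    _ ≤ C * S ^ (1 / p) * (c * W * m' ^ (1 / p)) := hnorms
    _ ≤ C * S ^ (1 / p) * (c * W * (((5 : ℝ) ^ n) ^ (1 / p) * m ^ (1 / p))) := by gcongr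
    _ = c⁻¹ * W * m ^ (1 / p) * (C * c ^ 2 * ((5 : ℝ) ^ n) ^ (1 / p) * S ^ (1 / p)) := by
        field_simp

/-- Let `1 < q ≤ ∞`, `s ∈ ℝ`, `n ≥ 1`. If there is `C > 0` such that
`‖a∗b‖_{ℓ^q_s} ≤ C ‖a‖_{ℓ^q_s} ‖b‖_{ℓ^q_s}` for all finitely supported nonnegative sequences
`a, b` on `ℤⁿ`, then necessarily `s > n/q′`. -/
theorem necessity_of_weight_for_convolution_algebra (n : ℕ) (hn : 0 < n)
    (q : ℝ≥0∞) (hq : 1 < q) (s : ℝ)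
    (h : ∃ C : ℝ≥0, 0 < C ∧ ∀ a b : (Fin n → ℤ) → ℝ,
      (Function.support a).Finite → (Function.support b).Finite →
      (∀ k, 0 ≤ a k) → (∀ k, 0 ≤ b k) →
      lqsNormR q s (fun k => ∑' ℓ, a ℓ * b (k - ℓ)) ≤ C * lqsNormR q s a * lqsNormR q s b) :
    (n : ℝ) * (1 - 1 / q.toReal) < s := by
  by_contra hs
  obtain ⟨C, -, hC⟩ := h
  set p := q.toReal
  have hθ : 0 < 1 - 1 / p := by
    rcases eq_or_ne q ∞ with rfl | hqtop
    · simp [p]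
    · have : 1 < p := by simpa using ENNReal.toReal_strict_mono hqtop hq
      rw [sub_pos, div_lt_one (by linarith)]
      exact this
  have hσ : s + n / p ≤ n := by
    rw [not_lt, mul_sub, mul_one_div] at hs
    linarith
  set K := C * (5 ^ |s|) ^ 2 * ((5 : ℝ) ^ n) ^ (1 / p)
  have hbound : ∀ N : ℕ, cubeSum n n N ^ (1 - 1 / p) ≤ K := fun N =>
    Real.rpow_one_sub_le_of_le_mul_rpow (cubeSum_pos n N) <|
      (cubeSum_le_cubeSum hσ N).trans
        (ConvolutionInequality.cubeSum_le hC (zero_lt_one.trans hq).ne' N)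
  obtain ⟨N, hN⟩ :=
    (((tendsto_rpow_atTop hθ).comp (tendsto_cubeSum_atTop hn)).eventually_gt_atTop K).exists
  exact (hbound N).not_gt hN
end
end
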